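/- Let φ be an Orlicz function taking only finite values and such that ∑_{n=n₁}^∞ φ(1/n) < ∞ for some n₁ ∈ ℕ. Then A_φ is strictly monotone (i.e. ‖x‖_φ < ‖y‖_φ whenever x, y ∈ A_φ satisfy 0 ≤ x(i) ≤ y(i) for all i and x ≠ y) if and only if φ(u) > 0 for every u > 0. -/

import Mathlib

/-!
If `0 ≤ x ≤ y` and `x ≠ y`, some Cesàro mean of `x` is strictly below that of `y`. When `φ` is
positive on `(0, ∞)` it is strictly increasing there, so `ρ(x/‖y‖) < ρ(y/‖y‖) ≤ 1`, the last
inequality by left continuity of `φ`. Since moreover `ρ(2x/‖y‖) < ∞` on `A_φ`, convexity allows a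
scale slightly below `‖y‖` at which the modular of `x` is still at most `1`, whence `‖x‖ < ‖y‖`.

If instead `φ(u) = 0` for some `u > 0`, take `x = u e₀` and `y = u e₀ + u e_N` with `N ≥ 2 / ‖x‖`.
The Cesàro means of `y` that differ from those of `x` are at most `2u / N`, so divided by any
`λ > ‖x‖` they fall in `[0, u]`, where `φ` vanishes; hence `‖y‖ ≤ ‖x‖`.
-/

open scoped ENNReal
open Filter

/-- An Orlicz function: `φ : ℝ → [0,∞]` even, convex, left continuous on `ℝ₊`,
continuous at zero, with `φ 0 = 0` and `φ u → ∞` as `u → ∞`. -/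
structure OrliczFunction where
  toFun : ℝ → ℝ≥0∞
  even' : ∀ u : ℝ, toFun (-u) = toFun u
  convex' : ∀ u v t : ℝ, 0 ≤ t → t ≤ 1 →
    toFun (t * u + (1 - t) * v) ≤ ENNReal.ofReal t * toFun u + ENNReal.ofReal (1 - t) * toFun v
  map_zero' : toFun 0 = 0
  leftContinuous' : ∀ t : ℝ, 0 < t → Tendsto toFun (nhdsWithin t (Set.Iio t)) (nhds (toFun t))
  continuousAtZero' : Tendsto toFun (nhds 0) (nhds 0)
  tendsto_top' : Tendsto toFun atTop (nhds ⊤)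

/-- The Cesàro mean `σx(n) = (1/n) ∑_{j=1}^n |x j|` (with `0`-based indexing). -/
noncomputable def cesaroMean (x : ℕ → ℝ) (n : ℕ) : ℝ :=
  (∑ j ∈ Finset.range (n + 1), |x j|) / (n + 1)

/-- The modular `ρ_φ(x) = ∑_i φ(σx(i))`. -/
noncomputable def rho (φ : OrliczFunction) (x : ℕ → ℝ) : ℝ≥0∞ :=
  ∑' n : ℕ, φ.toFun (cesaroMean x n)

/-- The Cesàro–Orlicz sequence space `ces_φ`. -/
def cesOrlicz (φ : OrliczFunction) : Set (ℕ → ℝ) :=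
  {x | ∃ lam : ℝ, 0 < lam ∧ rho φ (fun i => lam * x i) < ⊤}

/-- The Luxemburg norm `‖x‖_φ = inf {λ > 0 : ρ_φ(x/λ) ≤ 1}`. -/
noncomputable def luxNorm (φ : OrliczFunction) (x : ℕ → ℝ) : ℝ :=
  sInf {lam : ℝ | 0 < lam ∧ rho φ (fun i => x i / lam) ≤ 1}

/-- The subspace `A_φ` of `ces_φ`. -/
def Aphi (φ : OrliczFunction) : Set (ℕ → ℝ) :=
  {x | x ∈ cesOrlicz φ ∧ ∀ k : ℝ, 0 < k → ∃ nk : ℕ,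
    ∑' n : ℕ, φ.toFun ((k / ((nk + n + 1 : ℕ) : ℝ)) * ∑ i ∈ Finset.range (nk + n + 1), |x i|) < ⊤}

/-- `∃ n₁, ∑_{n=n₁}^∞ φ(1/n) < ∞`. -/
def TailFinite (φ : OrliczFunction) : Prop :=
  ∃ n₁ : ℕ, ∑' n : ℕ, φ.toFun (((n₁ + n + 1 : ℕ) : ℝ)⁻¹) < ⊤

/-- The `Δ₂`-condition at zero. -/
def Delta2Zero (φ : OrliczFunction) : Prop :=
  ∃ K : ℝ, 0 < K ∧ ∃ a : ℝ, 0 < a ∧ 0 < φ.toFun a ∧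
    ∀ u : ℝ, 0 ≤ u → u ≤ a → φ.toFun (2 * u) ≤ ENNReal.ofReal K * φ.toFun u

/-- `φ` takes only finite values. -/
def FiniteValued (φ : OrliczFunction) : Prop := ∀ u : ℝ, φ.toFun u ≠ ⊤

open Topology

namespace OrliczFunction

variable (φ : OrliczFunction)

theorem apply_mul_le {t : ℝ} (ht0 : 0 ≤ t) (ht1 : t ≤ 1) (u : ℝ) :
    φ.toFun (t * u) ≤ ENNReal.ofReal t * φ.toFun u := by
  simpa [φ.map_zero'] using φ.convex' u 0 t ht0 ht1

theorem monotoneOn : MonotoneOn φ.toFun (Set.Ici 0) := by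
  intro s hs t ht hst
  rcases (Set.mem_Ici.mp ht).eq_or_lt with rfl | ht
  · rw [le_antisymm hst hs]
  calc φ.toFun s = φ.toFun (s / t * t) := by rw [div_mul_cancel₀ s ht.ne']
    _ ≤ ENNReal.ofReal (s / t) * φ.toFun t :=
      φ.apply_mul_le (div_nonneg hs ht.le) ((div_le_one ht).mpr hst) t
    _ ≤ φ.toFun t := mul_le_of_le_one_left' (ENNReal.ofReal_le_one.mpr ((div_le_one ht).mpr hst))

theorem strictMonoOn (hfin : FiniteValued φ) (hpos : ∀ u : ℝ, 0 < u → 0 < φ.toFun u) :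
    StrictMonoOn φ.toFun (Set.Ici 0) := by
  intro s hs t ht hst
  have ht : 0 < t := lt_of_le_of_lt hs hst
  calc φ.toFun s = φ.toFun (s / t * t) := by rw [div_mul_cancel₀ s ht.ne']
    _ ≤ ENNReal.ofReal (s / t) * φ.toFun t :=
      φ.apply_mul_le (div_nonneg hs ht.le) ((div_le_one ht).mpr hst.le) t
    _ < 1 * φ.toFun t := (ENNReal.mul_lt_mul_iff_left (hpos t ht).ne' (hfin t)).mpr
      (ENNReal.ofReal_lt_one.mpr ((div_lt_one ht).mpr hst))
    _ = φ.toFun t := one_mul _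

theorem apply_eq_zero_of_le {u s : ℝ} (hu : φ.toFun u = 0) (hs : 0 ≤ s) (hsu : s ≤ u) :
    φ.toFun s = 0 :=
  le_antisymm (hu ▸ φ.monotoneOn hs (hs.trans hsu) hsu) bot_le

theorem apply_one_add_mul_le (s : ℝ) {t : ℝ} (ht0 : 0 ≤ t) (ht1 : t ≤ 1) :
    φ.toFun ((1 + t) * s) ≤ ENNReal.ofReal t * φ.toFun (2 * s) + φ.toFun s := by
  have h := φ.convex' (2 * s) s t ht0 ht1
  rw [show t * (2 * s) + (1 - t) * s = (1 + t) * s by ring] at h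
  exact h.trans (add_le_add le_rfl
    (mul_le_of_le_one_left' (ENNReal.ofReal_le_one.mpr (by linarith))))

theorem exists_one_lt : ∃ M : ℝ, 0 < M ∧ ∀ t, M ≤ t → 1 < φ.toFun t := by
  obtain ⟨M, hM⟩ := eventually_atTop.mp
    (φ.tendsto_top'.eventually (eventually_gt_nhds ENNReal.one_lt_top))
  exact ⟨max M 1, by positivity, fun t ht => hM t ((le_max_left M 1).trans ht)⟩

theorem tendsto_div_nhdsGT {s lam : ℝ} (hs : 0 ≤ s) (hlam : 0 < lam) :
    Tendsto (fun μ => φ.toFun (s / μ)) (𝓝[>] lam) (𝓝 (φ.toFun (s / lam))) := by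
  rcases hs.eq_or_lt with rfl | hs
  · simp only [zero_div, tendsto_const_nhds]
  refine (φ.leftContinuous' _ (div_pos hs hlam)).comp (tendsto_nhdsWithin_iff.mpr ⟨?_, ?_⟩)
  · exact ((continuousAt_const.div continuousAt_id hlam.ne').tendsto).mono_left
      nhdsWithin_le_nhds
  · filter_upwards [self_mem_nhdsWithin] with μ hμ
    exact div_lt_div_of_pos_left hs hlam hμ

end OrliczFunction

section Cesaro

theorem cesaroMean_nonneg (z : ℕ → ℝ) (n : ℕ) : 0 ≤ cesaroMean z n :=
  div_nonneg (Finset.sum_nonneg fun _ _ => abs_nonneg _) (by positivity)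

theorem cesaroMean_const_mul (z : ℕ → ℝ) {k : ℝ} (hk : 0 ≤ k) (n : ℕ) :
    cesaroMean (fun i => k * z i) n = k * cesaroMean z n := by
  simp only [cesaroMean, abs_mul, abs_of_nonneg hk, ← Finset.mul_sum, mul_div_assoc]

theorem cesaroMean_div_const (z : ℕ → ℝ) {l : ℝ} (hl : 0 ≤ l) (n : ℕ) :
    cesaroMean (fun i => z i / l) n = cesaroMean z n / l := by
  simp only [div_eq_inv_mul _ l, cesaroMean_const_mul z (inv_nonneg.mpr hl)]

theorem cesaroMean_le_cesaroMean {x y : ℕ → ℝ} (h : ∀ i, |x i| ≤ |y i|) (n : ℕ) :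
    cesaroMean x n ≤ cesaroMean y n :=
  div_le_div_of_nonneg_right (Finset.sum_le_sum fun i _ => h i) (by positivity)

theorem cesaroMean_lt_cesaroMean {x y : ℕ → ℝ} (h : ∀ i, |x i| ≤ |y i|) {i : ℕ}
    (hi : |x i| < |y i|) : cesaroMean x i < cesaroMean y i :=
  div_lt_div_of_pos_right
    (Finset.sum_lt_sum (fun j _ => h j) ⟨i, Finset.self_mem_range_succ i, hi⟩) (by positivity)

end Cesaro

section Modular

variable (φ : OrliczFunction)

theorem rho_div_const (z : ℕ → ℝ) {l : ℝ} (hl : 0 ≤ l) :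
    rho φ (fun i => z i / l) = ∑' n, φ.toFun (cesaroMean z n / l) := by
  simp only [rho, cesaroMean_div_const z hl]

theorem rho_const_mul_le (z : ℕ → ℝ) {t : ℝ} (ht0 : 0 ≤ t) (ht1 : t ≤ 1) :
    rho φ (fun i => t * z i) ≤ ENNReal.ofReal t * rho φ z := by
  simp only [rho, cesaroMean_const_mul z ht0, ← ENNReal.tsum_mul_left]
  exact ENNReal.tsum_le_tsum fun n => φ.apply_mul_le ht0 ht1 _

theorem rho_one_add_mul_le (z : ℕ → ℝ) {t : ℝ} (ht0 : 0 ≤ t) (ht1 : t ≤ 1) :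
    rho φ (fun i => (1 + t) * z i) ≤
      ENNReal.ofReal t * rho φ (fun i => 2 * z i) + rho φ z := by
  simp only [rho, cesaroMean_const_mul z (by linarith : (0 : ℝ) ≤ 1 + t),
    cesaroMean_const_mul z (by norm_num : (0 : ℝ) ≤ 2), ← ENNReal.tsum_mul_left,
    ← ENNReal.tsum_add]
  exact ENNReal.tsum_le_tsum fun n => φ.apply_one_add_mul_le _ ht0 ht1

theorem rho_div_le_rho_div (z : ℕ → ℝ) {l₁ l₂ : ℝ} (hl₁ : 0 < l₁) (h : l₁ ≤ l₂) :
    rho φ (fun i => z i / l₂) ≤ rho φ (fun i => z i / l₁) := by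
  have hl₂ : 0 < l₂ := hl₁.trans_le h
  rw [rho_div_const φ z hl₁.le, rho_div_const φ z hl₂.le]
  exact ENNReal.tsum_le_tsum fun n => φ.monotoneOn
    (div_nonneg (cesaroMean_nonneg z n) hl₂.le) (div_nonneg (cesaroMean_nonneg z n) hl₁.le)
    (div_le_div_of_nonneg_left (cesaroMean_nonneg z n) hl₁ h)

theorem rho_const_mul_lt_top (hfin : FiniteValued φ) {z : ℕ → ℝ} (hz : z ∈ Aphi φ) {k : ℝ}
    (hk : 0 < k) : rho φ (fun i => k * z i) < ⊤ := by
  obtain ⟨nk, hnk⟩ := hz.2 k hk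
  have htail : ∀ n : ℕ, φ.toFun (k / ((nk + n + 1 : ℕ) : ℝ) *
      ∑ i ∈ Finset.range (nk + n + 1), |z i|) = φ.toFun (k * cesaroMean z (n + nk)) := by
    intro n
    rw [cesaroMean, show n + nk + 1 = nk + n + 1 by omega]
    push_cast
    ring_nf
  simp only [rho, cesaroMean_const_mul z hk.le]
  rw [← Summable.sum_add_tsum_nat_add' (k := nk) ENNReal.summable]
  exact ENNReal.add_lt_top.mpr ⟨ENNReal.sum_lt_top.mpr fun i _ => (hfin _).lt_top,
    by simpa only [htail] using hnk⟩

end Modular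

section LuxemburgNorm

variable (φ : OrliczFunction)

theorem exists_rho_div_le_one {z : ℕ → ℝ} (hz : z ∈ cesOrlicz φ) :
    ∃ lam : ℝ, 0 < lam ∧ rho φ (fun i => z i / lam) ≤ 1 := by
  obtain ⟨c, hc, hρ⟩ := hz
  set C := (rho φ fun i => c * z i).toReal
  have hC : 0 ≤ C := ENNReal.toReal_nonneg
  -- the factor `(C + 1)⁻¹` brings the finite modular `ρ(c z) = C` below `1`
  refine ⟨(C + 1) / c, by positivity, ?_⟩
  have hz' : (fun i => z i / ((C + 1) / c)) = fun i => (C + 1)⁻¹ * (c * z i) := by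
    ext i; field_simp
  rw [hz']
  refine (rho_const_mul_le φ _ (by positivity) (inv_le_one_of_one_le₀ (by linarith))).trans ?_
  rw [← ENNReal.ofReal_toReal hρ.ne, ← ENNReal.ofReal_mul (by positivity)]
  exact ENNReal.ofReal_le_one.mpr (by rw [inv_mul_le_iff₀ (by positivity)]; linarith)

theorem luxNorm_le {z : ℕ → ℝ} {lam : ℝ} (hlam : 0 < lam)
    (h : rho φ (fun i => z i / lam) ≤ 1) : luxNorm φ z ≤ lam :=
  csInf_le ⟨0, fun _ hl => hl.1.le⟩ ⟨hlam, h⟩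

theorem rho_div_le_one_of_luxNorm_lt {z : ℕ → ℝ} (hz : z ∈ cesOrlicz φ) {lam : ℝ}
    (h : luxNorm φ z < lam) : rho φ (fun i => z i / lam) ≤ 1 := by
  obtain ⟨l, ⟨hl, hρ⟩, hlt⟩ := exists_lt_of_csInf_lt (exists_rho_div_le_one φ hz) h
  exact (rho_div_le_rho_div φ z hl hlt.le).trans hρ

theorem luxNorm_pos {z : ℕ → ℝ} (hz : z ∈ cesOrlicz φ) {n : ℕ} (hn : 0 < cesaroMean z n) :
    0 < luxNorm φ z := by
  obtain ⟨M, hM, hφM⟩ := φ.exists_one_lt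
  -- a single term of the modular already exceeds `1` once `λ ≤ σz(n) / M`
  refine (div_pos hn hM).trans_le (le_csInf (exists_rho_div_le_one φ hz) ?_)
  rintro l ⟨hl, hρ⟩
  by_contra! hlt
  have hterm : φ.toFun (cesaroMean z n / l) ≤ 1 := by
    rw [rho_div_const φ z hl.le] at hρ
    exact (ENNReal.le_tsum n).trans hρ
  rw [lt_div_iff₀ hM, mul_comm] at hlt
  exact hterm.not_gt (hφM _ ((le_div_iff₀ hl).mpr hlt.le))

theorem rho_div_luxNorm_le_one {z : ℕ → ℝ} (hz : z ∈ cesOrlicz φ) (hpos : 0 < luxNorm φ z) :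
    rho φ (fun i => z i / luxNorm φ z) ≤ 1 := by
  rw [rho_div_const φ z hpos.le]
  refine ENNReal.tsum_le_of_sum_range_le fun N => le_of_tendsto
    (tendsto_finsetSum _ fun n _ => φ.tendsto_div_nhdsGT (cesaroMean_nonneg z n) hpos) ?_
  filter_upwards [self_mem_nhdsWithin] with μ hμ
  have hρ := rho_div_le_one_of_luxNorm_lt φ hz hμ
  rw [rho_div_const φ z (hpos.trans hμ).le] at hρ
  exact (ENNReal.sum_le_tsum _).trans hρ

theorem luxNorm_lt_of_rho_div_lt_one {z : ℕ → ℝ} {lam : ℝ} (hlam : 0 < lam)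
    (h₂ : rho φ (fun i => 2 * (z i / lam)) ≠ ⊤) (h₁ : rho φ (fun i => z i / lam) < 1) :
    luxNorm φ z < lam := by
  obtain ⟨s, hs, hsA⟩ := ENNReal.exists_nnreal_pos_mul_lt h₂ (tsub_pos_of_lt h₁).ne'
  set t : ℝ := min s 1
  have ht : 0 < t := lt_min (NNReal.coe_pos.mpr hs) one_pos
  have hrho : rho φ (fun i => (1 + t) * (z i / lam)) ≤ 1 := calc
    _ ≤ ENNReal.ofReal t * rho φ (fun i => 2 * (z i / lam)) + rho φ (fun i => z i / lam) :=
      rho_one_add_mul_le φ _ ht.le (min_le_right _ _)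
    _ ≤ (1 - rho φ (fun i => z i / lam)) + rho φ (fun i => z i / lam) := by
      refine add_le_add (le_trans ?_ hsA.le) le_rfl
      gcongr
      exact (ENNReal.ofReal_le_ofReal (min_le_left _ _)).trans_eq (ENNReal.ofReal_coe_nnreal)
    _ = 1 := tsub_add_cancel_of_le h₁.le
  have hz' : (fun i => z i / (lam / (1 + t))) = fun i => (1 + t) * (z i / lam) := by
    ext i; field_simp
  calc luxNorm φ z ≤ lam / (1 + t) := luxNorm_le φ (by positivity) (hz' ▸ hrho)
    _ < lam := div_lt_self hlam (by linarith)

end LuxemburgNorm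

section StrictMonotonicity

variable (φ : OrliczFunction)

theorem luxNorm_lt_luxNorm (hfin : FiniteValued φ) (hpos : ∀ u : ℝ, 0 < u → 0 < φ.toFun u)
    {x y : ℕ → ℝ} (hx : x ∈ Aphi φ) (hy : y ∈ Aphi φ) (hx0 : ∀ i, 0 ≤ x i)
    (hxy : ∀ i, x i ≤ y i) (hne : x ≠ y) : luxNorm φ x < luxNorm φ y := by
  obtain ⟨i₀, hi₀⟩ := Function.ne_iff.mp hne
  have habs : ∀ i, |x i| ≤ |y i| := fun i => abs_le_abs_of_nonneg (hx0 i) (hxy i)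
  have hσ : cesaroMean x i₀ < cesaroMean y i₀ := by
    refine cesaroMean_lt_cesaroMean habs ?_
    rw [abs_of_nonneg (hx0 i₀), abs_of_nonneg ((hx0 i₀).trans (hxy i₀))]
    exact (hxy i₀).lt_of_ne hi₀
  set lam := luxNorm φ y
  have hlam : 0 < lam := luxNorm_pos φ hy.1 ((cesaroMean_nonneg x i₀).trans_lt hσ)
  have hρ_lt_top : ∀ k : ℝ, 0 < k → rho φ (fun i => k * (x i / lam)) ≠ ⊤ := fun k hk => by
    have h := rho_const_mul_lt_top φ hfin hx (div_pos hk hlam)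
    simp only [mul_div_assoc'] at h ⊢
    simpa only [div_mul_eq_mul_div] using h.ne
  refine luxNorm_lt_of_rho_div_lt_one φ hlam (hρ_lt_top 2 two_pos) ?_
  have hσ_nonneg : ∀ n, 0 ≤ cesaroMean x n / lam := fun n =>
    div_nonneg (cesaroMean_nonneg x n) hlam.le
  have hσ_le : ∀ n, cesaroMean x n / lam ≤ cesaroMean y n / lam := fun n =>
    div_le_div_of_nonneg_right (cesaroMean_le_cesaroMean habs n) hlam.le
  calc rho φ (fun i => x i / lam) < rho φ (fun i => y i / lam) := by
        rw [rho_div_const φ x hlam.le, rho_div_const φ y hlam.le]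
        refine ENNReal.tsum_lt_tsum (i := i₀) ?_
          (fun n => φ.monotoneOn (hσ_nonneg n) ((hσ_nonneg n).trans (hσ_le n)) (hσ_le n))
          (φ.strictMonoOn hfin hpos (hσ_nonneg i₀) ((hσ_nonneg i₀).trans (hσ_le i₀))
            (div_lt_div_of_pos_right hσ hlam))
        simpa only [one_mul, rho_div_const φ x hlam.le] using hρ_lt_top 1 one_pos
    _ ≤ 1 := rho_div_luxNorm_le_one φ hy.1 hlam

end StrictMonotonicity

theorem sum_range_abs_single {u : ℝ} (hu : 0 ≤ u) (j m : ℕ) :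
    ∑ i ∈ Finset.range m, |(Pi.single j u : ℕ → ℝ) i| = if j < m then u else 0 := by
  simp_rw [← Finset.mem_range, ← Finset.sum_pi_single' j u (Finset.range m)]
  exact Finset.sum_congr rfl fun i _ => abs_of_nonneg
    ((Pi.single_nonneg.mpr hu : (0 : ℕ → ℝ) ≤ Pi.single j u) i)

section Degenerate

variable (φ : OrliczFunction)

theorem mem_Aphi_of_sum_abs_le {u C : ℝ} (hu : 0 < u) (hφu : φ.toFun u = 0) (hC : 0 < C)
    {z : ℕ → ℝ} (hz : ∀ m, ∑ i ∈ Finset.range m, |z i| ≤ C) : z ∈ Aphi φ := by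
  have hvanish : ∀ k m : ℝ, 0 ≤ k → 0 < m → k * C ≤ u * m → ∀ s : ℕ,
      φ.toFun (k / m * ∑ i ∈ Finset.range s, |z i|) = 0 := fun k m hk hm hkm s => by
    have hS := Finset.sum_nonneg fun i (_ : i ∈ Finset.range s) => abs_nonneg (z i)
    refine φ.apply_eq_zero_of_le hφu (by positivity) ?_
    calc k / m * ∑ i ∈ Finset.range s, |z i| ≤ k / m * C := by gcongr; exact hz s
      _ ≤ u := by rw [div_mul_eq_mul_div, div_le_iff₀ hm]; exact hkm
  refine ⟨⟨u / C, by positivity, ?_⟩, fun k hk => ⟨⌈k * C / u⌉₊, ?_⟩⟩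
  · suffices rho φ (fun i => u / C * z i) = 0 by simp only [this, ENNReal.zero_lt_top]
    refine ENNReal.tsum_eq_zero.mpr fun n => ?_
    rw [cesaroMean_const_mul z (by positivity), cesaroMean, mul_div_assoc', mul_div_right_comm]
    refine hvanish _ _ (by positivity) (by positivity) ?_ _
    rw [div_mul_cancel₀ u hC.ne']
    nlinarith [(n.cast_nonneg : (0 : ℝ) ≤ n)]
  · suffices ∀ n : ℕ, φ.toFun (k / ((⌈k * C / u⌉₊ + n + 1 : ℕ) : ℝ) *
        ∑ i ∈ Finset.range (⌈k * C / u⌉₊ + n + 1), |z i|) = 0 by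
      simp only [this, tsum_zero, ENNReal.zero_lt_top]
    intro n
    refine hvanish _ _ hk.le (by positivity) ?_ _
    rw [← div_le_iff₀' hu]
    exact (Nat.le_ceil _).trans (by push_cast; linarith)

theorem exists_luxNorm_le_of_eq_zero {u : ℝ} (hu : 0 < u) (hφu : φ.toFun u = 0) :
    ∃ x y : ℕ → ℝ, x ∈ Aphi φ ∧ y ∈ Aphi φ ∧ (∀ i, 0 ≤ x i) ∧ (∀ i, x i ≤ y i) ∧ x ≠ y ∧
      luxNorm φ y ≤ luxNorm φ x := by
  have hsingle : ∀ j, (0 : ℕ → ℝ) ≤ Pi.single j u := fun j => Pi.single_nonneg.mpr hu.le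
  set x : ℕ → ℝ := Pi.single 0 u
  have hx0 : ∀ i, 0 ≤ x i := hsingle 0
  have hSx : ∀ m, ∑ i ∈ Finset.range m, |x i| = if 0 < m then u else 0 :=
    sum_range_abs_single hu.le 0
  have hxA : x ∈ Aphi φ := mem_Aphi_of_sum_abs_le φ hu hφu hu fun m => by
    rw [hSx]; split_ifs <;> linarith
  have hxpos : 0 < luxNorm φ x :=
    luxNorm_pos φ hxA.1 (n := 0) (by rw [cesaroMean, hSx]; simp [hu])
  set N := ⌈2 / luxNorm φ x⌉₊ + 1
  set y : ℕ → ℝ := x + Pi.single N u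
  have hSy : ∀ m, ∑ i ∈ Finset.range m, |y i| =
      (if 0 < m then u else 0) + if N < m then u else 0 := fun m => by
    simp only [y, Pi.add_apply]
    rw [← hSx, ← sum_range_abs_single hu.le N, ← Finset.sum_add_distrib]
    exact Finset.sum_congr rfl fun i _ => abs_add_eq_add_abs_iff _ _ |>.mpr
      (Or.inl ⟨hx0 i, hsingle N i⟩)
  have hyA : y ∈ Aphi φ := mem_Aphi_of_sum_abs_le φ hu hφu (by positivity : 0 < 2 * u)
    fun m => by rw [hSy]; split_ifs <;> linarith
  refine ⟨x, y, hxA, hyA, hx0, fun i => le_add_of_nonneg_right (hsingle N i), fun h => ?_, ?_⟩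
  · exact hu.ne' (by simpa [x, y] using (congrFun h N).symm)
  refine le_of_forall_gt_imp_ge_of_dense fun lam hlam => ?_
  have hlam0 : 0 < lam := hxpos.trans hlam
  refine luxNorm_le φ hlam0 ((ENNReal.tsum_le_tsum fun n => ?_).trans
    (rho_div_le_one_of_luxNorm_lt φ hxA.1 hlam))
  rw [cesaroMean_div_const y hlam0.le, cesaroMean_div_const x hlam0.le, cesaroMean, cesaroMean,
    hSy, hSx]
  by_cases hn : N < n + 1
  · have hN : 2 / luxNorm φ x ≤ n + 1 := (Nat.le_ceil _).trans
      (by exact_mod_cast (by omega : ⌈2 / luxNorm φ x⌉₊ ≤ n + 1))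
    have h2 : 2 ≤ (n + 1) * lam := calc
      (2 : ℝ) = 2 / luxNorm φ x * luxNorm φ x := (div_mul_cancel₀ 2 hxpos.ne').symm
      _ ≤ (n + 1) * lam := mul_le_mul hN hlam.le hxpos.le (by positivity)
    rw [if_pos n.succ_pos, if_pos hn, φ.apply_eq_zero_of_le hφu (by positivity)]
    · exact bot_le
    rw [div_div, div_le_iff₀ (by positivity)]
    nlinarith
  · simp [hn]

end Degenerate

theorem stmt_16_general (φ : OrliczFunction) (hfin : FiniteValued φ) :
    (∀ x y : ℕ → ℝ, x ∈ Aphi φ → y ∈ Aphi φ → (∀ i, 0 ≤ x i) → (∀ i, x i ≤ y i) →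
        x ≠ y → luxNorm φ x < luxNorm φ y) ↔
      ∀ u : ℝ, 0 < u → 0 < φ.toFun u := by
  refine ⟨fun hsm u hu => pos_iff_ne_zero.mpr fun hφu => ?_,
    fun hpos x y hx hy hx0 hxy hne => luxNorm_lt_luxNorm φ hfin hpos hx hy hx0 hxy hne⟩
  obtain ⟨x, y, hx, hy, hx0, hxy, hne, hyx⟩ := exists_luxNorm_le_of_eq_zero φ hu hφu
  exact (hsm x y hx hy hx0 hxy hne).not_ge hyx

/-- `A_φ` is strictly monotone iff `φ(u) > 0` for all `u > 0`. -/
theorem stmt_16 (φ : OrliczFunction) (hfin : FiniteValued φ) (htail : TailFinite φ) :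
    (∀ x y : ℕ → ℝ, x ∈ Aphi φ → y ∈ Aphi φ → (∀ i, 0 ≤ x i) → (∀ i, x i ≤ y i) →
        x ≠ y → luxNorm φ x < luxNorm φ y) ↔
      ∀ u : ℝ, 0 < u → 0 < φ.toFun u :=
  stmt_16_general φ hfin
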